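/- In the ring of formal power series in q over the polynomial ring ℚ[z], the identity ∑_{n=1}^∞ z^n q^{n²} · (zq^{n+1};q)_∞ · ((q;q)_{n−1})^{−1} · (1+q^n)^{−1} = ∑_{n=1}^∞ (−1)^{n−1} z^n q^{n(n+1)/2} · (∏_{j=1}^{n} (1+q^j))^{−1} holds. -/

import Mathlib

/-
Expanding `(z q^{n+1}; q)_∞` by Euler's identity turns the left side into a double series
whose `(n, i)` term carries `z^{n+i+1}`; regrouping along the diagonals `n + i = m`, the
coefficient of `z^{m+1}` reduces to the finite identity
  `∑_{k+c=m} (-1)^k q^{k(k+1)/2} / ((q)_k (q)_c (1 + q^{k+1})) = 1 / (-q; q)_{m+1}`,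
the partial-fraction expansion of `1 / (a; q)_{m+1}` at `a = -q`. It is proved in the field
of fractions by induction on `m`, with a WZ certificate making the inductive step telescope.
Euler's identity holds because both sides `F_j` satisfy `F_j = (1 - z q^j) F_{j+1}` and
`F_j ≡ 1 mod q^j`, so their difference is divisible by every power of `q`.
-/

open PowerSeries

/-- The coefficientwise sum of a family of formal power series; it agrees with
the sum of the family whenever `coeff N (f n) = 0` for `n > N` (so that the
partial sums converge coefficientwise in the `q`-adic topology). -/
noncomputable def seriesSum {R : Type*} [CommRing R] (f : ℕ → PowerSeries R) : PowerSeries R :=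
  PowerSeries.mk fun N => ∑ n ∈ Finset.range (N + 1), PowerSeries.coeff (R := R) N (f n)

/-- The coefficientwise infinite product of a family of formal power series;
it agrees with the product of the family whenever each factor `f k` is
`1 + (terms of order > k)` (so that the partial products converge
coefficientwise in the `q`-adic topology). -/
noncomputable def seriesProd {R : Type*} [CommRing R] (f : ℕ → PowerSeries R) : PowerSeries R :=
  PowerSeries.mk fun N => PowerSeries.coeff (R := R) N (∏ k ∈ Finset.range (N + 1), f k)

/-- The series `z`: the coefficient variable of `ℚ[z]` viewed as a constant
formal power series in `q`. -/
noncomputable def zz : PowerSeries (Polynomial ℚ) :=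
  PowerSeries.C (R := Polynomial ℚ) Polynomial.X

open Finset

variable {R : Type*} [CommRing R]

section SeriesOps

lemma eq_zero_of_forall_X_pow_dvd {φ : R⟦X⟧} (h : ∀ n, X ^ n ∣ φ) : φ = 0 := by
  ext n
  exact X_pow_dvd_iff.mp (h (n + 1)) n n.lt_succ_self

lemma coeff_eq_of_X_pow_dvd_sub {φ ψ : R⟦X⟧} {N n : ℕ} (h : X ^ N ∣ φ - ψ) (hn : n < N) :
    coeff n φ = coeff n ψ :=
  sub_eq_zero.mp (by simpa using X_pow_dvd_iff.mp h n hn)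

lemma X_pow_dvd_prod_sub_one {ι : Type*} {s : Finset ι} {f : ι → R⟦X⟧} {n : ℕ}
    (h : ∀ i ∈ s, X ^ n ∣ f i - 1) : X ^ n ∣ ∏ i ∈ s, f i - 1 :=
  prod_induction f (fun g => X ^ n ∣ g - 1)
    (fun a b ha hb => by simpa [mul_sub, sub_add_sub_cancel] using dvd_add (hb.mul_left a) ha)
    (by simp) h

lemma coeff_seriesSum (f : ℕ → R⟦X⟧) (N : ℕ) :
    coeff N (seriesSum f) = ∑ n ∈ range (N + 1), coeff N (f n) :=
  coeff_mk _ _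

lemma coeff_seriesProd (f : ℕ → R⟦X⟧) (N : ℕ) :
    coeff N (seriesProd f) = coeff N (∏ k ∈ range (N + 1), f k) :=
  coeff_mk _ _

lemma seriesSum_sub (f g : ℕ → R⟦X⟧) :
    seriesSum (fun n => f n - g n) = seriesSum f - seriesSum g := by
  ext N
  simp [coeff_seriesSum, sum_sub_distrib]

lemma X_pow_dvd_seriesSum {f : ℕ → R⟦X⟧} {N : ℕ} (h : ∀ n, X ^ N ∣ f n) :
    X ^ N ∣ seriesSum f :=
  X_pow_dvd_iff.mpr fun m hm => by
    rw [coeff_seriesSum]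
    exact sum_eq_zero fun n _ => X_pow_dvd_iff.mp (h n) m hm

lemma X_pow_dvd_seriesSum_sub_sum {f : ℕ → R⟦X⟧} (hf : ∀ n, X ^ n ∣ f n) (N : ℕ) :
    X ^ N ∣ seriesSum f - ∑ n ∈ range N, f n := by
  refine X_pow_dvd_iff.mpr fun m hm => ?_
  rw [map_sub, coeff_seriesSum, map_sum, sub_eq_zero]
  refine sum_subset (range_subset_range.mpr hm) fun n _ hnm => ?_
  exact X_pow_dvd_iff.mp (hf n) m (by simpa using hnm)

lemma seriesSum_eq_add_seriesSum_succ {f : ℕ → R⟦X⟧} (hf : ∀ n, X ^ n ∣ f n) :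
    seriesSum f = f 0 + seriesSum fun n => f (n + 1) := by
  ext N
  rw [map_add, coeff_seriesSum, coeff_seriesSum, sum_range_succ', sum_range_succ,
    X_pow_dvd_iff.mp (hf (N + 1)) N N.lt_succ_self, add_zero, add_comm]

lemma mul_seriesSum (a : R⟦X⟧) {f : ℕ → R⟦X⟧} (hf : ∀ n, X ^ n ∣ f n) :
    a * seriesSum f = seriesSum fun n => a * f n := by
  ext N
  rw [coeff_seriesSum, ← map_sum, ← mul_sum]
  refine coeff_eq_of_X_pow_dvd_sub (N := N + 1) ?_ N.lt_succ_self
  rw [← mul_sub]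
  exact (X_pow_dvd_seriesSum_sub_sum hf (N + 1)).mul_left a

lemma seriesSum_seriesSum {F : ℕ → ℕ → R⟦X⟧} (hF : ∀ n i, X ^ (n + i) ∣ F n i) :
    (seriesSum fun n => seriesSum (F n)) =
      seriesSum fun m => ∑ p ∈ antidiagonal m, F p.1 p.2 := by
  ext N
  simp only [coeff_seriesSum, map_sum, Nat.sum_antidiagonal_eq_sum_range_succ_mk,
    Nat.succ_eq_add_one]
  rw [sum_range_diag_flip (N + 1) fun n i => coeff N (F n i)]
  refine sum_congr rfl fun n hn => (sum_subset (range_subset_range.mpr (Nat.sub_le _ _)) ?_).symm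
  intro i _ hi
  exact X_pow_dvd_iff.mp (hF n i) N (by simp at hn hi; omega)

lemma X_pow_dvd_prod_range_sub {f : ℕ → R⟦X⟧} (hf : ∀ k, X ^ (k + 1) ∣ f k - 1)
    {N M : ℕ} (h : N ≤ M) :
    X ^ (N + 1) ∣ ∏ k ∈ range M, f k - ∏ k ∈ range N, f k := by
  rw [← prod_range_mul_prod_Ico f h, ← mul_sub_one]
  refine dvd_mul_of_dvd_right (X_pow_dvd_prod_sub_one fun k hk => ?_) _
  exact (pow_dvd_pow X (by simp at hk; omega)).trans (hf k)

lemma X_pow_dvd_seriesProd_sub_prod {f : ℕ → R⟦X⟧} (hf : ∀ k, X ^ (k + 1) ∣ f k - 1) (N : ℕ) :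
    X ^ N ∣ seriesProd f - ∏ k ∈ range N, f k := by
  refine X_pow_dvd_iff.mpr fun m hm => ?_
  rw [map_sub, coeff_seriesProd, sub_eq_zero]
  exact coeff_eq_of_X_pow_dvd_sub (dvd_sub_comm.mp (X_pow_dvd_prod_range_sub hf hm)) (by omega)

lemma X_pow_dvd_seriesProd_sub_one {f : ℕ → R⟦X⟧} (hf : ∀ k, X ^ (k + 1) ∣ f k - 1) {N : ℕ}
    (h : ∀ k, X ^ N ∣ f k - 1) : X ^ N ∣ seriesProd f - 1 := by
  simpa using dvd_add (X_pow_dvd_seriesProd_sub_prod hf N)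
    (X_pow_dvd_prod_sub_one (s := range N) fun k _ => h k)

lemma seriesProd_eq_mul_seriesProd_succ {f : ℕ → R⟦X⟧} (hf : ∀ k, X ^ (k + 1) ∣ f k - 1) :
    seriesProd f = f 0 * seriesProd fun k => f (k + 1) := by
  refine sub_eq_zero.mp (eq_zero_of_forall_X_pow_dvd fun N => ?_)
  have hf' : ∀ k, X ^ (k + 1) ∣ f (k + 1) - 1 :=
    fun k => (pow_dvd_pow X (k + 1).le_succ).trans (hf (k + 1))
  have h1 : X ^ N ∣ seriesProd f - ∏ k ∈ range (N + 1), f k :=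
    (pow_dvd_pow X N.le_succ).trans (X_pow_dvd_seriesProd_sub_prod hf (N + 1))
  have h2 : X ^ N ∣ f 0 * (seriesProd (fun k => f (k + 1)) - ∏ k ∈ range N, f (k + 1)) :=
    (X_pow_dvd_seriesProd_sub_prod hf' N).mul_left (f 0)
  have key := dvd_sub h1 h2
  rwa [prod_range_succ', mul_comm _ (f 0), mul_sub, sub_sub_sub_cancel_right] at key

end SeriesOps

lemma succ_choose_two (n : ℕ) : (n + 1).choose 2 = n.choose 2 + n := by
  rw [Nat.choose_succ_succ', Nat.choose_one_right, add_comm]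

-- `qPoch x n` is `(x; x)_n`.
def qPoch {A : Type*} [CommRing A] (x : A) (n : ℕ) : A := ∏ k ∈ range n, (1 - x ^ (k + 1))

lemma qPoch_succ {A : Type*} [CommRing A] (x : A) (n : ℕ) :
    qPoch x (n + 1) = qPoch x n * (1 - x ^ (n + 1)) :=
  prod_range_succ _ _

lemma isUnit_of_constantCoeff_eq_one {φ : R⟦X⟧} (h : constantCoeff φ = 1) : IsUnit φ :=
  isUnit_iff_constantCoeff.mpr (h ▸ isUnit_one)

lemma isUnit_qPoch (n : ℕ) : IsUnit (qPoch (X : R⟦X⟧) n) :=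
  isUnit_of_constantCoeff_eq_one (by simp [qPoch, map_prod])

lemma isUnit_one_add_X_pow {n : ℕ} (hn : n ≠ 0) : IsUnit (1 + X ^ n : R⟦X⟧) :=
  isUnit_of_constantCoeff_eq_one (by simp [hn])

section Euler

noncomputable def eulerTerm (a : R⟦X⟧) (j i : ℕ) : R⟦X⟧ :=
  (-a) ^ i * X ^ (j * i + i.choose 2) * Ring.inverse (qPoch X i)

lemma eulerTerm_zero (a : R⟦X⟧) (j : ℕ) : eulerTerm a j 0 = 1 := by
  simp [eulerTerm, qPoch]

lemma X_pow_dvd_eulerTerm (a : R⟦X⟧) (j i : ℕ) : X ^ (j * i) ∣ eulerTerm a j i :=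
  ((pow_dvd_pow X (Nat.le_add_right _ _)).mul_left _).mul_right _

lemma inverse_qPoch_eq (n : ℕ) :
    Ring.inverse (qPoch (X : R⟦X⟧) n) = (1 - X ^ (n + 1)) * Ring.inverse (qPoch X (n + 1)) := by
  rw [qPoch_succ, Ring.mul_inverse_rev, ← mul_assoc,
    Ring.mul_inverse_cancel _ (isUnit_of_constantCoeff_eq_one (by simp)), one_mul]

lemma eulerTerm_succ (a : R⟦X⟧) (j i : ℕ) :
    eulerTerm a j (i + 1) = eulerTerm a (j + 1) (i + 1) - a * X ^ j * eulerTerm a (j + 1) i := by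
  simp only [eulerTerm, succ_choose_two]
  rw [inverse_qPoch_eq i]
  ring

lemma X_pow_dvd_eulerTerm_succ (a : R⟦X⟧) (j i : ℕ) : X ^ i ∣ eulerTerm a (j + 1) i :=
  (pow_dvd_pow X (Nat.le_mul_of_pos_left i j.succ_pos)).trans (X_pow_dvd_eulerTerm a _ i)

lemma seriesSum_eulerTerm_eq (a : R⟦X⟧) (j : ℕ) :
    seriesSum (eulerTerm a (j + 1)) =
      (1 - a * X ^ (j + 1)) * seriesSum (eulerTerm a (j + 1 + 1)) := by
  have h₁ := X_pow_dvd_eulerTerm_succ a j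
  have h₂ := X_pow_dvd_eulerTerm_succ a (j + 1)
  calc seriesSum (eulerTerm a (j + 1))
      = 1 + seriesSum fun i => eulerTerm a (j + 1) (i + 1) := by
        rw [seriesSum_eq_add_seriesSum_succ h₁, eulerTerm_zero]
    _ = 1 + seriesSum (fun i => eulerTerm a (j + 1 + 1) (i + 1))
          - seriesSum (fun i => a * X ^ (j + 1) * eulerTerm a (j + 1 + 1) i) := by
        rw [add_sub_assoc, ← seriesSum_sub]
        exact congrArg (1 + seriesSum ·) (funext fun i => eulerTerm_succ a (j + 1) i)
    _ = (1 - a * X ^ (j + 1)) * seriesSum (eulerTerm a (j + 1 + 1)) := by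
        rw [← mul_seriesSum _ h₂, seriesSum_eq_add_seriesSum_succ h₂, eulerTerm_zero]
        ring

lemma eq_zero_of_X_pow_dvd_of_succ_dvd {D : ℕ → R⟦X⟧} (hX : ∀ j, X ^ j ∣ D j)
    (hD : ∀ j, D (j + 1) ∣ D j) (j : ℕ) : D j = 0 := by
  have hchain : ∀ n, D (j + n) ∣ D j := fun n => by
    induction n with
    | zero => rfl
    | succ n ih => exact (hD (j + n)).trans ih
  exact eq_zero_of_forall_X_pow_dvd fun n =>
    (pow_dvd_pow X (Nat.le_add_left n j)).trans ((hX (j + n)).trans (hchain n))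

theorem seriesProd_eq_seriesSum_eulerTerm (a : R⟦X⟧) (j : ℕ) :
    seriesProd (fun k => 1 - a * X ^ (j + 1 + k)) = seriesSum (eulerTerm a (j + 1)) := by
  set P : ℕ → R⟦X⟧ := fun j => seriesProd fun k => 1 - a * X ^ (j + 1 + k)
  have hfactor : ∀ j k, X ^ (k + 1) ∣ (1 - a * X ^ (j + 1 + k)) - 1 :=
    fun j k => ⟨-(a * X ^ j), by ring⟩
  have hP : ∀ j, P j = (1 - a * X ^ (j + 1)) * P (j + 1) := fun j => by
    simp only [P]
    rw [seriesProd_eq_mul_seriesProd_succ (hfactor j), add_zero]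
    congr 3 with k
    rw [show j + 1 + (k + 1) = j + 1 + 1 + k by omega]
  have hPE : ∀ j, X ^ (j + 1) ∣ P j - seriesSum (eulerTerm a (j + 1)) := fun j => by
    have hP1 : X ^ (j + 1) ∣ P j - 1 :=
      X_pow_dvd_seriesProd_sub_one (hfactor j) fun k => ⟨-(a * X ^ k), by ring⟩
    have hE1 : X ^ (j + 1) ∣ seriesSum (eulerTerm a (j + 1)) - 1 := by
      rw [seriesSum_eq_add_seriesSum_succ (X_pow_dvd_eulerTerm_succ a j), eulerTerm_zero,
        add_sub_cancel_left]
      exact X_pow_dvd_seriesSum fun i =>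
        (pow_dvd_pow X (Nat.le_mul_of_pos_right _ i.succ_pos)).trans (X_pow_dvd_eulerTerm a _ _)
    simpa using dvd_sub hP1 hE1
  refine sub_eq_zero.mp (eq_zero_of_X_pow_dvd_of_succ_dvd (D := fun j =>
    P j - seriesSum (eulerTerm a (j + 1))) (fun j => ?_) (fun j => ?_) j)
  · exact (pow_dvd_pow X j.le_succ).trans (hPE j)
  · exact ⟨1 - a * X ^ (j + 1), by rw [hP j, seriesSum_eulerTerm_eq a j]; ring⟩

end Euler

lemma sum_antidiagonal_sub_succ {M : Type*} [AddCommGroup M] (g : ℕ → ℕ → M) (m : ℕ) :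
    ∑ p ∈ antidiagonal m, (g p.1 (p.2 + 1) - g (p.1 + 1) p.2) = g 0 (m + 1) - g (m + 1) 0 := by
  induction m generalizing g with
  | zero => simp
  | succ m ih =>
    rw [Nat.sum_antidiagonal_succ, ih fun k c => g (k + 1) c]
    abel

section PartialFraction

variable {K : Type*} [Field K] {x : K}

lemma one_sub_pow_ne_zero (hx : ¬IsOfFinOrder x) {n : ℕ} (hn : n ≠ 0) : 1 - x ^ n ≠ 0 :=
  sub_ne_zero.mpr fun h => hx (isOfFinOrder_iff_pow_eq_one.mpr ⟨n, Nat.pos_of_ne_zero hn, h.symm⟩)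

lemma one_add_pow_ne_zero (hx : ¬IsOfFinOrder x) {n : ℕ} (hn : n ≠ 0) : 1 + x ^ n ≠ 0 := by
  intro h
  refine one_sub_pow_ne_zero hx (n := 2 * n) (by omega) ?_
  rw [show 1 - x ^ (2 * n) = (1 - x ^ n) * (1 + x ^ n) by ring, h, mul_zero]

lemma qPoch_ne_zero (hx : ¬IsOfFinOrder x) (n : ℕ) : qPoch x n ≠ 0 :=
  prod_ne_zero_iff.mpr fun k _ => one_sub_pow_ne_zero hx k.succ_ne_zero

-- `pfCert` is a WZ certificate for `pfTerm`; its factor `1 - x ^ k` makes it vanish at `k = 0`.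
def pfTerm (x : K) (k c : ℕ) : K :=
  (-1) ^ k * x ^ (k + 1).choose 2 / (qPoch x c * qPoch x k * (1 + x ^ (k + 1)))

def pfCert (x : K) (k c : ℕ) : K :=
  (-1) ^ k * x ^ ((k + 1).choose 2 + c) * (1 - x ^ k) /
    (qPoch x c * qPoch x k * (1 - x ^ (k + c)))

lemma pfCert_zero_left (c : ℕ) : pfCert x 0 c = 0 := by
  simp [pfCert]

lemma pfTerm_wz (hx : ¬IsOfFinOrder x) (k c : ℕ) :
    (1 + x ^ (k + c + 2)) * pfTerm x k (c + 1) - pfTerm x k c =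
      pfCert x k (c + 1) - pfCert x (k + 1) c := by
  have := qPoch_ne_zero hx c
  have := qPoch_ne_zero hx k
  have := one_add_pow_ne_zero hx k.succ_ne_zero
  have := one_sub_pow_ne_zero hx c.succ_ne_zero
  have := one_sub_pow_ne_zero hx k.succ_ne_zero
  have := one_sub_pow_ne_zero hx (k + c).succ_ne_zero
  simp only [pfTerm, pfCert, qPoch_succ, succ_choose_two, show k + (c + 1) = k + c + 1 by omega,
    show k + 1 + c = k + c + 1 by omega]
  field_simp
  ring

lemma one_add_pow_mul_pfTerm (hx : ¬IsOfFinOrder x) (k : ℕ) :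
    (1 + x ^ (k + 2)) * pfTerm x (k + 1) 0 = pfCert x (k + 1) 0 := by
  have := qPoch_ne_zero hx (k + 1)
  have := one_add_pow_ne_zero hx (k + 1).succ_ne_zero
  have := one_sub_pow_ne_zero hx k.succ_ne_zero
  simp only [pfTerm, pfCert, add_zero]
  field_simp

theorem sum_antidiagonal_pfTerm (hx : ¬IsOfFinOrder x) (m : ℕ) :
    ∑ p ∈ antidiagonal m, pfTerm x p.1 p.2 = (∏ j ∈ range (m + 1), (1 + x ^ (j + 1)))⁻¹ := by
  induction m with
  | zero => simp [pfTerm, qPoch]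
  | succ m ih =>
    have hstep : (1 + x ^ (m + 2)) * ∑ p ∈ antidiagonal (m + 1), pfTerm x p.1 p.2 =
        ∑ p ∈ antidiagonal m, pfTerm x p.1 p.2 := by
      have hwz : ∀ p ∈ antidiagonal m, (1 + x ^ (m + 2)) * pfTerm x p.1 (p.2 + 1) =
          pfTerm x p.1 p.2 + (pfCert x p.1 (p.2 + 1) - pfCert x (p.1 + 1) p.2) := by
        rintro ⟨k, c⟩ h
        rw [HasAntidiagonal.mem_antidiagonal] at h
        subst h
        linear_combination pfTerm_wz hx k c
      rw [Nat.sum_antidiagonal_succ', mul_add, mul_sum, sum_congr rfl hwz, sum_add_distrib,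
        sum_antidiagonal_sub_succ, pfCert_zero_left, one_add_pow_mul_pfTerm hx]
      ring
    have := one_add_pow_ne_zero hx (n := m + 2) (by omega)
    rw [prod_range_succ, mul_inv, ← ih, ← hstep]
    field_simp

end PartialFraction

lemma map_ringInverse {A K : Type*} [CommRing A] [Field K] (φ : A →+* K) {u : A}
    (hu : IsUnit u) : φ (Ring.inverse u) = (φ u)⁻¹ := by
  obtain ⟨u, rfl⟩ := hu
  rw [Ring.inverse_unit, map_units_inv]

lemma not_isOfFinOrder_algebraMap_X [IsDomain R] :
    ¬IsOfFinOrder (algebraMap R⟦X⟧ (FractionRing R⟦X⟧) X) := by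
  rw [isOfFinOrder_iff_pow_eq_one]
  rintro ⟨n, hn, h⟩
  rw [← map_pow, ← map_one (algebraMap R⟦X⟧ _)] at h
  simpa [hn.ne'] using congrArg constantCoeff (IsFractionRing.injective _ _ h)

theorem sum_antidiagonal_inverse [IsDomain R] (m : ℕ) :
    ∑ p ∈ antidiagonal m, (-1) ^ p.1 * X ^ (p.1 + 1).choose 2 * Ring.inverse (qPoch X p.2)
        * Ring.inverse (qPoch X p.1) * Ring.inverse (1 + X ^ (p.1 + 1)) =
      Ring.inverse (∏ j ∈ range (m + 1), (1 + X ^ (j + 1)) : R⟦X⟧) := by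
  set φ := algebraMap R⟦X⟧ (FractionRing R⟦X⟧)
  have hφ : ∀ n, φ (qPoch X n) = qPoch (φ X) n := fun n => by simp [qPoch, map_prod]
  have hterm : ∀ k c, φ ((-1) ^ k * X ^ (k + 1).choose 2 * Ring.inverse (qPoch X c)
      * Ring.inverse (qPoch X k) * Ring.inverse (1 + X ^ (k + 1))) = pfTerm (φ X) k c := by
    intro k c
    rw [map_mul, map_mul, map_mul, map_mul, map_ringInverse φ (isUnit_qPoch c),
      map_ringInverse φ (isUnit_qPoch k), map_ringInverse φ (isUnit_one_add_X_pow k.succ_ne_zero)]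
    simp only [map_neg, map_one, map_pow, map_add, hφ, pfTerm, div_eq_mul_inv, mul_inv,
      Nat.succ_eq_add_one]
    ring
  refine IsFractionRing.injective R⟦X⟧ (FractionRing R⟦X⟧) ?_
  calc φ (∑ p ∈ antidiagonal m, _)
      = ∑ p ∈ antidiagonal m, pfTerm (φ X) p.1 p.2 := by
        rw [map_sum]
        exact sum_congr rfl fun p _ => hterm p.1 p.2
    _ = (∏ j ∈ range (m + 1), (1 + φ X ^ (j + 1)))⁻¹ :=
        sum_antidiagonal_pfTerm not_isOfFinOrder_algebraMap_X m
    _ = φ (Ring.inverse (∏ j ∈ range (m + 1), (1 + X ^ (j + 1)))) := by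
        rw [map_ringInverse φ (isUnit_of_constantCoeff_eq_one (by simp [map_prod])), map_prod]
        simp

section Identity

variable (a : R⟦X⟧)

noncomputable def lhsTerm (n i : ℕ) : R⟦X⟧ :=
  a ^ (n + 1) * X ^ ((n + 1) ^ 2) * Ring.inverse (qPoch X n) * Ring.inverse (1 + X ^ (n + 1))
    * eulerTerm a (n + 1 + 1) i

lemma lhsTerm_eq_seriesSum (n : ℕ) :
    a ^ (n + 1) * X ^ ((n + 1) ^ 2) * seriesProd (fun k => 1 - a * X ^ (n + 1 + 1 + k))
        * Ring.inverse (qPoch X n) * Ring.inverse (1 + X ^ (n + 1)) =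
      seriesSum (lhsTerm a n) := by
  rw [seriesProd_eq_seriesSum_eulerTerm]
  calc _ = a ^ (n + 1) * X ^ ((n + 1) ^ 2) * Ring.inverse (qPoch X n)
          * Ring.inverse (1 + X ^ (n + 1)) * seriesSum (eulerTerm a (n + 1 + 1)) := by ring
    _ = _ := mul_seriesSum _ (X_pow_dvd_eulerTerm_succ a _)

lemma X_pow_dvd_lhsTerm (n i : ℕ) : X ^ (n + i) ∣ lhsTerm a n i := by
  obtain ⟨e, he⟩ := X_pow_dvd_eulerTerm a (n + 1 + 1) i
  refine (pow_dvd_pow X (show n + i ≤ (n + 1) ^ 2 + (n + 1 + 1) * i by nlinarith)).trans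
    ⟨a ^ (n + 1) * Ring.inverse (qPoch X n) * Ring.inverse (1 + X ^ (n + 1)) * e, ?_⟩
  rw [lhsTerm, he, pow_add (X : R⟦X⟧) ((n + 1) ^ 2)]
  ring

lemma lhsTerm_exponent (n i : ℕ) :
    (n + 1) ^ 2 + (n + 1 + 1) * i + i.choose 2 = (n + i + 2).choose 2 + (n + 1).choose 2 := by
  apply Nat.cast_injective (R := ℚ)
  push_cast [Nat.cast_choose_two]
  ring

lemma lhsTerm_eq_mul (n i : ℕ) :
    lhsTerm a n i = (-1) ^ (n + i) * a ^ (n + i + 1) * X ^ (n + i + 2).choose 2 *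
      ((-1) ^ n * X ^ (n + 1).choose 2 * Ring.inverse (qPoch X i)
        * Ring.inverse (qPoch X n) * Ring.inverse (1 + X ^ (n + 1))) := by
  have hsign : (-1 : R⟦X⟧) ^ i = (-1) ^ (n + i) * (-1) ^ n := by
    rw [pow_add, mul_right_comm, ← mul_pow, neg_one_mul, neg_neg, one_pow, one_mul]
  calc lhsTerm a n i
      = (-1) ^ i * a ^ (n + i + 1) * X ^ ((n + 1) ^ 2 + (n + 1 + 1) * i + i.choose 2)
          * Ring.inverse (qPoch X i) * Ring.inverse (qPoch X n)
          * Ring.inverse (1 + X ^ (n + 1)) := by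
        rw [lhsTerm, eulerTerm, neg_pow]
        ring
    _ = _ := by
        rw [hsign, lhsTerm_exponent]
        ring

lemma sum_antidiagonal_lhsTerm [IsDomain R] (m : ℕ) :
    ∑ p ∈ antidiagonal m, lhsTerm a p.1 p.2 =
      (-1) ^ m * a ^ (m + 1) * X ^ (m + 2).choose 2
        * Ring.inverse (∏ j ∈ range (m + 1), (1 + X ^ (j + 1))) := by
  rw [← sum_antidiagonal_inverse, mul_sum]
  refine sum_congr rfl fun p hp => ?_
  rw [lhsTerm_eq_mul, HasAntidiagonal.mem_antidiagonal.mp hp]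

theorem seriesSum_mul_seriesProd_eq [IsDomain R] :
    seriesSum (fun n => a ^ (n + 1) * X ^ ((n + 1) ^ 2)
        * seriesProd (fun k => 1 - a * X ^ (n + 1 + 1 + k))
        * Ring.inverse (qPoch X n) * Ring.inverse (1 + X ^ (n + 1))) =
      seriesSum (fun m => (-1) ^ m * a ^ (m + 1) * X ^ (m + 2).choose 2
        * Ring.inverse (∏ j ∈ range (m + 1), (1 + X ^ (j + 1)))) := by
  simp only [lhsTerm_eq_seriesSum, seriesSum_seriesSum (X_pow_dvd_lhsTerm a),
    sum_antidiagonal_lhsTerm]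

end Identity

/-- Identity (2.2). -/
theorem stmt2 :
    seriesSum (fun m =>
      zz ^ (m + 1) * (X : PowerSeries (Polynomial ℚ)) ^ ((m + 1) ^ 2)
        * seriesProd (fun k => 1 - zz * X ^ (m + 1 + 1 + k))
        * Ring.inverse (∏ k ∈ Finset.range (m + 1 - 1), (1 - (X : PowerSeries (Polynomial ℚ)) ^ (k + 1)))
        * Ring.inverse (1 + (X : PowerSeries (Polynomial ℚ)) ^ (m + 1))) =
    seriesSum (fun m =>
      (-1 : PowerSeries (Polynomial ℚ)) ^ (m + 1 - 1) * zz ^ (m + 1)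
        * X ^ ((m + 1) * (m + 1 + 1) / 2)
        * Ring.inverse (∏ j ∈ Finset.range (m + 1), (1 + (X : PowerSeries (Polynomial ℚ)) ^ (j + 1)))) := by
  have hexp : ∀ m : ℕ, (m + 1) * (m + 1 + 1) / 2 = (m + 2).choose 2 := fun m => by
    rw [Nat.choose_two_right, mul_comm]
    rfl
  simpa only [Nat.add_sub_cancel, hexp, qPoch] using seriesSum_mul_seriesProd_eq zz
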